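/- arXiv:2003.11403 — 2 statements merged into one kernel-verified Lean document; each statement's English description precedes it below -/
import Mathlib

section
/- Let (S, ρ) be a complete separable metric space, let V : S × S → [0,∞) be lower semicontinuous and positive definite (V(s₁,s₂) = 0 if and only if s₁ = s₂). Let (Ω, F, P) be a probability space and T̂ : Ω × S → S a jointly measurable map, and let Q be the Markov transition kernel on S defined by Q(s, B) = P({ω : T̂(ω, s) ∈ B}). If there exists α ∈ (0,1) such that ∫_Ω V(T̂(ω,s), T̂(ω,s')) dP(ω) ≤ α · V(s, s') for all s, s' ∈ S, then W_V(μ₁Q, μ₂Q) ≤ α · W_V(μ₁, μ₂) for all Borel probability measures μ₁, μ₂ on S for which W_V(μ₁, μ₂) is finite. -/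
open MeasureTheory ProbabilityTheory Filter Topology
open scoped ENNReal NNReal

variable {S : Type*}

/-- `ξ` is a coupling of `μ₁` and `μ₂`: a Borel probability measure on `S × S`
whose first marginal is `μ₁` and second marginal is `μ₂`. -/
def IsCoupling [MeasurableSpace S] (ξ : Measure (S × S)) (μ₁ μ₂ : Measure S) : Prop :=
  IsProbabilityMeasure ξ ∧ ξ.map Prod.fst = μ₁ ∧ ξ.map Prod.snd = μ₂

/-- The Wasserstein divergence associated with a nonnegative function `V`:
`W_V(μ₁, μ₂) = inf over couplings ξ of ∫ V dξ`. -/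
noncomputable def WV [MeasurableSpace S] (V : S → S → ℝ) (μ₁ μ₂ : Measure S) : ℝ≥0∞ :=
  ⨅ (ξ : Measure (S × S)) (_ : IsCoupling ξ μ₁ μ₂),
    ∫⁻ p, ENNReal.ofReal (V p.1 p.2) ∂ξ

/-- One-step action of a Markov kernel on measures: `μ ↦ μQ`. -/
noncomputable def kernelStep [MeasurableSpace S] (Q : Kernel S S) (μ : Measure S) : Measure S :=
  μ.bind (fun s => Q s)

/-- The `k`-fold action `μ ↦ μQ^k`. -/
noncomputable def kernelIter [MeasurableSpace S] (Q : Kernel S S) (k : ℕ) (μ : Measure S) :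
    Measure S :=
  (kernelStep Q)^[k] μ

/-!
Couple synchronously: given a coupling `ξ` of `μ₁` and `μ₂`, draw `(s, s') ∼ ξ` and an
independent `ω ∼ P`, and apply the same random map `T ω` to both coordinates. The law of
`(T ω s, T ω s')` is a coupling of `μ₁Q` and `μ₂Q`, and by Tonelli and the averaged contraction
its cost is at most `α ∫ V dξ`. Taking the infimum over `ξ` gives the bound.
-/

section SynchronousCoupling

variable {Ω X Y : Type*} [MeasurableSpace Ω] [MeasurableSpace X] [MeasurableSpace Y]

theorem map_uncurry_prod_eq_bind (P : Measure Ω) [SFinite P] (μ : Measure X) [SFinite μ]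
    {T : Ω → X → Y} (hT : Measurable (Function.uncurry T)) {Q : Kernel X Y}
    (hQ : ∀ x, Q x = P.map (fun ω => T ω x)) :
    (P.prod μ).map (Function.uncurry T) = μ.bind Q := by
  ext B hB
  rw [Measure.map_apply hT hB, Measure.prod_apply_symm (hT hB),
    Measure.bind_apply hB Q.aemeasurable]
  refine lintegral_congr fun x => ?_
  have hTx : Measurable fun ω => T ω x := hT.comp (measurable_id.prodMk measurable_const)
  rw [hQ, Measure.map_apply hTx hB]
  rfl

noncomputable def synchronousCoupling (P : Measure Ω) (T : Ω → X → Y) (ξ : Measure (X × X)) :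
    Measure (Y × Y) :=
  (P.prod ξ).map fun q => (T q.1 q.2.1, T q.1 q.2.2)

variable {P : Measure Ω} {T : Ω → X → Y} {ξ : Measure (X × X)}

theorem measurable_synchronous (hT : Measurable (Function.uncurry T)) :
    Measurable fun q : Ω × (X × X) => (T q.1 q.2.1, T q.1 q.2.2) :=
  (hT.comp (measurable_fst.prodMk measurable_snd.fst)).prodMk
    (hT.comp (measurable_fst.prodMk measurable_snd.snd))

section SFinite

variable [SFinite P] [SFinite ξ]

theorem map_fst_synchronousCoupling (hT : Measurable (Function.uncurry T)) :
    (synchronousCoupling P T ξ).map Prod.fst =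
      (P.prod (ξ.map Prod.fst)).map (Function.uncurry T) := by
  have hprod : P.prod (ξ.map Prod.fst) = (P.prod ξ).map (Prod.map id Prod.fst) := by
    simpa using Measure.map_prod_map P ξ measurable_id measurable_fst
  rw [synchronousCoupling, hprod, Measure.map_map measurable_fst (measurable_synchronous hT),
    Measure.map_map hT (measurable_id.prodMap measurable_fst)]
  rfl

theorem map_snd_synchronousCoupling (hT : Measurable (Function.uncurry T)) :
    (synchronousCoupling P T ξ).map Prod.snd =
      (P.prod (ξ.map Prod.snd)).map (Function.uncurry T) := by
  have hprod : P.prod (ξ.map Prod.snd) = (P.prod ξ).map (Prod.map id Prod.snd) := by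
    simpa using Measure.map_prod_map P ξ measurable_id measurable_snd
  rw [synchronousCoupling, hprod, Measure.map_map measurable_snd (measurable_synchronous hT),
    Measure.map_map hT (measurable_id.prodMap measurable_snd)]
  rfl

theorem lintegral_synchronousCoupling (hT : Measurable (Function.uncurry T))
    {f : Y × Y → ℝ≥0∞} (hf : Measurable f) :
    ∫⁻ p, f p ∂synchronousCoupling P T ξ = ∫⁻ p, ∫⁻ ω, f (T ω p.1, T ω p.2) ∂P ∂ξ := by
  rw [synchronousCoupling, lintegral_map hf (measurable_synchronous hT)]
  exact lintegral_prod_symm' _ (hf.comp (measurable_synchronous hT))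

end SFinite

end SynchronousCoupling

section RandomOperator

variable {Ω X : Type*} [MeasurableSpace Ω] [MeasurableSpace X] {P : Measure Ω} {T : Ω → X → X}
  {ξ : Measure (X × X)}

theorem lintegral_synchronousCoupling_le [SFinite P] [SFinite ξ]
    (hT : Measurable (Function.uncurry T)) {c : X × X → ℝ≥0∞} (hc : Measurable c) {a : ℝ≥0∞}
    (hcontr : ∀ p, ∫⁻ ω, c (T ω p.1, T ω p.2) ∂P ≤ a * c p) :
    ∫⁻ p, c p ∂synchronousCoupling P T ξ ≤ a * ∫⁻ p, c p ∂ξ := by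
  rw [lintegral_synchronousCoupling hT hc, ← lintegral_const_mul a hc]
  exact lintegral_mono hcontr

theorem IsCoupling.synchronousCoupling [IsProbabilityMeasure P]
    (hT : Measurable (Function.uncurry T)) {Q : Kernel X X}
    (hQ : ∀ x, Q x = P.map (fun ω => T ω x)) {μ₁ μ₂ : Measure X} (hξ : IsCoupling ξ μ₁ μ₂) :
    IsCoupling (synchronousCoupling P T ξ) (kernelStep Q μ₁) (kernelStep Q μ₂) := by
  obtain ⟨hξprob, rfl, rfl⟩ := hξ
  refine ⟨Measure.isProbabilityMeasure_map (measurable_synchronous hT).aemeasurable, ?_, ?_⟩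
  · rw [map_fst_synchronousCoupling hT, map_uncurry_prod_eq_bind P _ hT hQ]
    rfl
  · rw [map_snd_synchronousCoupling hT, map_uncurry_prod_eq_bind P _ hT hQ]
    rfl

end RandomOperator

section WV

variable {X : Type*} [MeasurableSpace X] {V : X → X → ℝ}

theorem WV_le_lintegral_of_isCoupling {ξ : Measure (X × X)} {μ₁ μ₂ : Measure X}
    (hξ : IsCoupling ξ μ₁ μ₂) : WV V μ₁ μ₂ ≤ ∫⁻ p, ENNReal.ofReal (V p.1 p.2) ∂ξ := by
  unfold WV
  exact iInf₂_le ξ hξ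

theorem WV_le_mul_of_forall_isCoupling {μ₁ μ₂ ν₁ ν₂ : Measure X} {c : ℝ≥0∞}
    (hc₀ : c ≠ 0) (hc_top : c ≠ ⊤)
    (h : ∀ ξ, IsCoupling ξ μ₁ μ₂ → WV V ν₁ ν₂ ≤ c * ∫⁻ p, ENNReal.ofReal (V p.1 p.2) ∂ξ) :
    WV V ν₁ ν₂ ≤ c * WV V μ₁ μ₂ := by
  unfold WV at h ⊢
  simp only [ENNReal.mul_iInf_of_ne hc₀ hc_top]
  exact le_iInf₂ h

end WV

theorem wasserstein_contraction_of_random_operator_general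
    [MetricSpace S] [TopologicalSpace.SeparableSpace S]
    [MeasurableSpace S] [BorelSpace S]
    {Ω : Type*} [MeasurableSpace Ω] (P : Measure Ω) [IsProbabilityMeasure P]
    (V : S → S → ℝ)
    (hVlsc : LowerSemicontinuous (fun p : S × S => V p.1 p.2))
    (T : Ω → S → S)
    (hTmeas : Measurable (fun p : Ω × S => T p.1 p.2))
    (Q : Kernel S S)
    (hQ : ∀ s : S, Q s = P.map (fun ω => T ω s))
    (α : ℝ) (hα0 : 0 < α)
    (hcontr : ∀ s s' : S,
      ∫⁻ ω, ENNReal.ofReal (V (T ω s) (T ω s')) ∂P ≤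
        ENNReal.ofReal α * ENNReal.ofReal (V s s'))
    (μ₁ μ₂ : Measure S) :
    WV V (kernelStep Q μ₁) (kernelStep Q μ₂) ≤ ENNReal.ofReal α * WV V μ₁ μ₂ := by
  have hV : Measurable fun p : S × S => ENNReal.ofReal (V p.1 p.2) :=
    ENNReal.measurable_ofReal.comp hVlsc.measurable
  refine WV_le_mul_of_forall_isCoupling (ENNReal.ofReal_pos.mpr hα0).ne' ENNReal.ofReal_ne_top
    fun ξ hξ => ?_
  have : IsProbabilityMeasure ξ := hξ.1
  calc WV V (kernelStep Q μ₁) (kernelStep Q μ₂)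
      ≤ ∫⁻ p, ENNReal.ofReal (V p.1 p.2) ∂synchronousCoupling P T ξ :=
        WV_le_lintegral_of_isCoupling (hξ.synchronousCoupling hTmeas hQ)
    _ ≤ ENNReal.ofReal α * ∫⁻ p, ENNReal.ofReal (V p.1 p.2) ∂ξ :=
        lintegral_synchronousCoupling_le hTmeas hV fun p => hcontr p.1 p.2

/-- The distribution of an iterated random operator contracting on average with respect to a
divergence `V` induces a Markov kernel that is a contraction with respect to the
Wasserstein divergence `W_V`. -/
theorem wasserstein_contraction_of_random_operator
    [MetricSpace S] [CompleteSpace S] [TopologicalSpace.SeparableSpace S]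
    [MeasurableSpace S] [BorelSpace S]
    {Ω : Type*} [MeasurableSpace Ω] (P : Measure Ω) [IsProbabilityMeasure P]
    (V : S → S → ℝ)
    (hVnn : ∀ s₁ s₂, 0 ≤ V s₁ s₂)
    (hVlsc : LowerSemicontinuous (fun p : S × S => V p.1 p.2))
    (hVpd : ∀ s₁ s₂, V s₁ s₂ = 0 ↔ s₁ = s₂)
    (T : Ω → S → S)
    (hTmeas : Measurable (fun p : Ω × S => T p.1 p.2))
    (Q : Kernel S S) [IsMarkovKernel Q]
    (hQ : ∀ s : S, Q s = P.map (fun ω => T ω s))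
    (α : ℝ) (hα0 : 0 < α) (hα1 : α < 1)
    (hcontr : ∀ s s' : S,
      ∫⁻ ω, ENNReal.ofReal (V (T ω s) (T ω s')) ∂P ≤
        ENNReal.ofReal α * ENNReal.ofReal (V s s'))
    (μ₁ μ₂ : Measure S) [IsProbabilityMeasure μ₁] [IsProbabilityMeasure μ₂]
    (hfin : WV V μ₁ μ₂ ≠ ⊤) :
    WV V (kernelStep Q μ₁) (kernelStep Q μ₂) ≤ ENNReal.ofReal α * WV V μ₁ μ₂ :=
  wasserstein_contraction_of_random_operator_general P V hVlsc T hTmeas Q hQ α hα0 hcontr μ₁ μ₂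
end

section
/- Let N ∈ ℕ, N ≥ 1, 0 < c ≤ L, b > 0, and let f₁, …, f_N : ℝ^d → ℝ be c-strongly convex differentiable functions whose gradients are L-Lipschitz. On S = ℝ^d × (ℝ^d)^N with elements s = (x, (φ_n)_{n=1}^N), define V_b(s, s') = ‖x − x'‖₂² + b · Σ_{n=1}^N ‖∇f_n(φ_n) − ∇f_n(φ'_n)‖₂². Then V_b is a divergence function: it is lower semicontinuous, V_b(s,s') = 0 if and only if s = s', V_b is symmetric, and V_b satisfies inf-compactness (for every q ≥ 0 and every compact K ⊆ S there is a compact L ⊆ S with V_b(s₁,s₂) ≥ q whenever s₁ ∉ L and s₂ ∈ K). -/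
open MeasureTheory ProbabilityTheory Filter Topology
open scoped ENNReal NNReal


/-- A divergence function on a metric space: lower semicontinuous, nonnegative,
positive definite, symmetric, and inf-compact. -/
structure IsDivergence {S : Type*} [MetricSpace S] (V : S → S → ℝ) : Prop where
  nonneg : ∀ s₁ s₂, 0 ≤ V s₁ s₂
  lsc : LowerSemicontinuous (fun p : S × S => V p.1 p.2)
  eq_zero_iff : ∀ s₁ s₂, V s₁ s₂ = 0 ↔ s₁ = s₂
  symm : ∀ s₁ s₂, V s₁ s₂ = V s₂ s₁
  infCompact : ∀ q : ℝ, 0 ≤ q → ∀ K : Set S, IsCompact K →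
    ∃ L : Set S, IsCompact L ∧ ∀ s₁ ∉ L, ∀ s₂ ∈ K, q ≤ V s₁ s₂

/-! Strong convexity makes every gradient expanding, `c * ‖x - y‖ ≤ ‖∇f x - ∇f y‖`: adding the
first-order convexity inequalities of `f - c/2 ‖·‖²` at `x` and at `y` gives
`c ‖x - y‖² ≤ ⟪∇f x - ∇f y, x - y⟫`, and Cauchy–Schwarz finishes. Consequently
`V_b(s, s') ≥ min 1 (b c²) · dist(s, s')²`, and on a proper space a continuous symmetric function
that vanishes on the diagonal and dominates a positive multiple of `dist²` is a divergence:
for inf-compactness, take `L` to be the closed `√(q / m)`-thickening of `K`. -/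

open Set Metric
open InnerProductSpace
open scoped RealInnerProductSpace

theorem ConvexOn.le_sub_of_hasFDerivAt {E : Type*} [NormedAddCommGroup E] [NormedSpace ℝ E]
    {f : E → ℝ} {f' : E →L[ℝ] ℝ} {x : E} (hf : ConvexOn ℝ univ f) (hx : HasFDerivAt f f' x)
    (y : E) : f' (y - x) ≤ f y - f x := by
  have hline : HasDerivAt (f ∘ AffineMap.lineMap (k := ℝ) x y) (f' (y - x)) 0 :=
    hx.comp_hasDerivAt_of_eq (0 : ℝ) AffineMap.hasDerivAt_lineMap (by simp)
  simpa [slope_def_field] using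
    (hf.comp_affineMap (AffineMap.lineMap x y)).le_slope_of_hasDerivAt (mem_univ 0) (mem_univ 1)
      one_pos hline

section StrongConvex

variable {E : Type*} [NormedAddCommGroup E] [InnerProductSpace ℝ E] [CompleteSpace E]
  {f : E → ℝ} {G : E → E} {c : ℝ}

theorem StrongConvexOn.mul_norm_sub_sq_le_inner_gradient_sub (hf : StrongConvexOn univ c f)
    (hG : ∀ x, HasGradientAt f (G x) x) (x y : E) :
    c * ‖x - y‖ ^ 2 ≤ ⟪G x - G y, x - y⟫ := by
  have hconv := strongConvexOn_iff_convex.1 hf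
  have hderiv (z : E) : HasFDerivAt (fun z => f z - c / 2 * ‖z‖ ^ 2)
      (toDual ℝ E (G z) - (c / 2) • (2 • innerSL ℝ z)) z :=
    (hG z).hasFDerivAt.sub ((hasStrictFDerivAt_norm_sq z).hasFDerivAt.const_smul (c / 2))
  have h₁ := hconv.le_sub_of_hasFDerivAt (hderiv x) y
  have h₂ := hconv.le_sub_of_hasFDerivAt (hderiv y) x
  simp only [sub_apply, smul_apply, toDual_apply_apply, coe_innerSL_apply, nsmul_eq_mul,
    smul_eq_mul] at h₁ h₂
  rw [← real_inner_self_eq_norm_sq]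
  simp only [inner_sub_left, inner_sub_right, real_inner_comm x y] at h₁ h₂ ⊢
  linarith

theorem StrongConvexOn.mul_norm_sub_le_norm_gradient_sub (hf : StrongConvexOn univ c f)
    (hG : ∀ x, HasGradientAt f (G x) x) (x y : E) :
    c * ‖x - y‖ ≤ ‖G x - G y‖ := by
  rcases (norm_nonneg (x - y)).eq_or_lt with h | h
  · simp [← h]
  · refine le_of_mul_le_mul_right ?_ h
    calc c * ‖x - y‖ * ‖x - y‖ = c * ‖x - y‖ ^ 2 := by ring
      _ ≤ ⟪G x - G y, x - y⟫ := hf.mul_norm_sub_sq_le_inner_gradient_sub hG x y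
      _ ≤ ‖G x - G y‖ * ‖x - y‖ := real_inner_le_norm _ _

end StrongConvex

theorem Prod.dist_sq_le {α β : Type*} [PseudoMetricSpace α] [PseudoMetricSpace β]
    (p q : α × β) : dist p q ^ 2 ≤ dist p.1 q.1 ^ 2 + dist p.2 q.2 ^ 2 := by
  rw [Prod.dist_eq]
  rcases max_cases (dist p.1 q.1) (dist p.2 q.2) with ⟨h, -⟩ | ⟨h, -⟩ <;> rw [h]
  exacts [le_add_of_nonneg_right (sq_nonneg _), le_add_of_nonneg_left (sq_nonneg _)]

theorem dist_pi_sq_le_sum {ι : Type*} [Fintype ι] {X : ι → Type*} [∀ i, PseudoMetricSpace (X i)]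
    (f g : ∀ i, X i) : dist f g ^ 2 ≤ ∑ i, dist (f i) (g i) ^ 2 := by
  refine (Real.le_sqrt dist_nonneg (by positivity)).1 <|
    (dist_pi_le_iff (Real.sqrt_nonneg _)).2 fun i => Real.le_sqrt_of_sq_le ?_
  exact Finset.single_le_sum (f := fun i => dist (f i) (g i) ^ 2) (fun i _ => by positivity)
    (Finset.mem_univ i)

theorem IsDivergence.of_mul_dist_sq_le {S : Type*} [MetricSpace S] [ProperSpace S]
    {V : S → S → ℝ} (hcont : Continuous fun p : S × S => V p.1 p.2)
    (hsymm : ∀ s₁ s₂, V s₁ s₂ = V s₂ s₁) (hdiag : ∀ s, V s s = 0) {m : ℝ} (hm : 0 < m)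
    (hle : ∀ s₁ s₂, m * dist s₁ s₂ ^ 2 ≤ V s₁ s₂) : IsDivergence V where
  nonneg s₁ s₂ := (by positivity : 0 ≤ m * dist s₁ s₂ ^ 2).trans (hle s₁ s₂)
  lsc := hcont.lowerSemicontinuous
  eq_zero_iff s₁ s₂ := by
    refine ⟨fun h => ?_, fun h => h ▸ hdiag s₁⟩
    have := hle s₁ s₂
    rw [h] at this
    exact dist_eq_zero.1 ((sq_nonpos_iff _).1 (nonpos_of_mul_nonpos_right this hm))
  symm := hsymm
  infCompact q hq K hK := by
    refine ⟨cthickening √(q / m) K, hK.cthickening, fun s₁ hs₁ s₂ hs₂ => ?_⟩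
    have hfar : √(q / m) ≤ dist s₁ s₂ :=
      (not_le.1 fun h => hs₁ (mem_cthickening_of_dist_le _ _ _ _ hs₂ h)).le
    calc q = m * √(q / m) ^ 2 := by rw [Real.sq_sqrt (by positivity)]; field_simp
      _ ≤ m * dist s₁ s₂ ^ 2 := by gcongr
      _ ≤ V s₁ s₂ := hle s₁ s₂

section Saga

variable {ι E : Type*} [Fintype ι] [NormedAddCommGroup E]

/-- The paper's `V_b`, with `g n` standing for `∇f_n`. -/
def sagaDivergence (b : ℝ) (g : ι → E → E) (s s' : E × (ι → E)) : ℝ :=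
  ‖s.1 - s'.1‖ ^ 2 + b * ∑ n, ‖g n (s.2 n) - g n (s'.2 n)‖ ^ 2

variable {b c : ℝ} {g : ι → E → E}

theorem sagaDivergence_comm (s s' : E × (ι → E)) :
    sagaDivergence b g s s' = sagaDivergence b g s' s := by
  simp only [sagaDivergence, norm_sub_rev]

theorem sagaDivergence_self (s : E × (ι → E)) : sagaDivergence b g s s = 0 := by
  simp [sagaDivergence]

theorem continuous_sagaDivergence (hg : ∀ n, Continuous (g n)) :
    Continuous fun p : (E × (ι → E)) × (E × (ι → E)) => sagaDivergence b g p.1 p.2 := by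
  unfold sagaDivergence
  fun_prop

theorem min_mul_dist_sq_le_sagaDivergence (hb : 0 ≤ b) (hc : 0 ≤ c)
    (hg : ∀ n x y, c * ‖x - y‖ ≤ ‖g n x - g n y‖) (s s' : E × (ι → E)) :
    min 1 (b * c ^ 2) * dist s s' ^ 2 ≤ sagaDivergence b g s s' := by
  have hgn (n : ι) : c ^ 2 * dist (s.2 n) (s'.2 n) ^ 2 ≤ ‖g n (s.2 n) - g n (s'.2 n)‖ ^ 2 := by
    rw [dist_eq_norm, ← mul_pow]
    exact pow_le_pow_left₀ (by positivity) (hg n _ _) 2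
  calc min 1 (b * c ^ 2) * dist s s' ^ 2
      ≤ min 1 (b * c ^ 2) * (dist s.1 s'.1 ^ 2 + ∑ n, dist (s.2 n) (s'.2 n) ^ 2) := by
        gcongr
        exact (Prod.dist_sq_le s s').trans (by gcongr; exact dist_pi_sq_le_sum _ _)
    _ ≤ dist s.1 s'.1 ^ 2 + b * c ^ 2 * ∑ n, dist (s.2 n) (s'.2 n) ^ 2 := by
        rw [mul_add]
        gcongr
        exacts [mul_le_of_le_one_left (by positivity) (min_le_left _ _), min_le_right _ _]
    _ ≤ sagaDivergence b g s s' := by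
        rw [sagaDivergence, dist_eq_norm, mul_assoc, Finset.mul_sum]
        gcongr with n
        exact hgn n

theorem isDivergence_sagaDivergence [ProperSpace E] (hb : 0 < b) (hc : 0 < c)
    (hcont : ∀ n, Continuous (g n)) (hg : ∀ n x y, c * ‖x - y‖ ≤ ‖g n x - g n y‖) :
    IsDivergence (sagaDivergence b g) :=
  .of_mul_dist_sq_le (continuous_sagaDivergence hcont) sagaDivergence_comm sagaDivergence_self
    (by positivity : 0 < min 1 (b * c ^ 2)) (min_mul_dist_sq_le_sagaDivergence hb.le hc.le hg)

end Saga

theorem saga_Vb_isDivergence_general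
    (d N : ℕ) (c L b : ℝ) (hc : 0 < c) (hb : 0 < b)
    (f : Fin N → EuclideanSpace ℝ (Fin d) → ℝ)
    (g : Fin N → EuclideanSpace ℝ (Fin d) → EuclideanSpace ℝ (Fin d))
    (hdiff : ∀ n x, HasGradientAt (f n) (g n x) x)
    (hconv : ∀ n, ConvexOn ℝ Set.univ (fun x => f n x - c / 2 * ‖x‖ ^ 2))
    (hlip : ∀ n, LipschitzWith (Real.toNNReal L) (g n)) :
    IsDivergence
      (fun (s s' : EuclideanSpace ℝ (Fin d) × (Fin N → EuclideanSpace ℝ (Fin d))) =>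
        ‖s.1 - s'.1‖ ^ 2 + b * ∑ n : Fin N, ‖g n (s.2 n) - g n (s'.2 n)‖ ^ 2) :=
  isDivergence_sagaDivergence hb hc (fun n => (hlip n).continuous) fun n =>
    (strongConvexOn_iff_convex.2 (hconv n)).mul_norm_sub_le_norm_gradient_sub (hdiff n)

/-- The SAGA function `V_b` is a divergence function on `ℝ^d × (ℝ^d)^N`. -/
theorem saga_Vb_isDivergence
    (d N : ℕ) (hN : 1 ≤ N) (c L b : ℝ) (hc : 0 < c) (hcL : c ≤ L) (hb : 0 < b)
    (f : Fin N → EuclideanSpace ℝ (Fin d) → ℝ)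
    (g : Fin N → EuclideanSpace ℝ (Fin d) → EuclideanSpace ℝ (Fin d))
    (hdiff : ∀ n x, HasGradientAt (f n) (g n x) x)
    (hconv : ∀ n, ConvexOn ℝ Set.univ (fun x => f n x - c / 2 * ‖x‖ ^ 2))
    (hlip : ∀ n, LipschitzWith (Real.toNNReal L) (g n)) :
    IsDivergence
      (fun (s s' : EuclideanSpace ℝ (Fin d) × (Fin N → EuclideanSpace ℝ (Fin d))) =>
        ‖s.1 - s'.1‖ ^ 2 + b * ∑ n : Fin N, ‖g n (s.2 n) - g n (s'.2 n)‖ ^ 2) :=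
  saga_Vb_isDivergence_general d N c L b hc hb f g hdiff hconv hlip
end
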